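/- For all integers n, j ≥ 1, p̄(n − j²) = op_{2,1}(n, j) + op_{2,1}(n, j+1). -/

import Mathlib

/-- An overpartition of `n`: non-overlined parts with multiplicities given by `count`,
overlined parts given by the finite set `over` (each value overlined at most once). -/
structure Overpartition (n : ℕ) where
  count : ℕ →₀ ℕ
  overlined : Finset ℕ
  count_zero : count 0 = 0
  zero_not_over : 0 ∉ overlined
  weight : (count.sum fun k m => k * m) + ∑ k ∈ overlined, k = n

/-- The number of overpartitions of `n`. -/
noncomputable def pbar (n : ℕ) : ℕ := Nat.card (Overpartition n)

/-- `pbar` extended to the integers by `0` on negatives. -/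
noncomputable def pbarZ (m : ℤ) : ℕ := if m < 0 then 0 else pbar m.toNat

/-- The smallest odd positive integer that is not a non-overlined part. -/
noncomputable def mex21 {n : ℕ} (π : Overpartition n) : ℕ := sInf {m : ℕ | m % 2 = 1 ∧ π.count m = 0}

/-- The number of overpartitions `π` of `n` with `mex21 π ≥ 2k+1` and
`mex21 π ≡ 2k+1 (mod 4)`. -/
noncomputable def op21 (n k : ℕ) : ℕ :=
  Nat.card {π : Overpartition n // 2 * k + 1 ≤ mex21 π ∧ mex21 π % 4 = (2 * k + 1) % 4}

/-- Total number of occurrences of the value `p` (overlined or not) in `π`. -/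
noncomputable def multTotal {n : ℕ} (π : Overpartition n) (p : ℕ) : ℕ :=
  π.count p + if p ∈ π.overlined then 1 else 0

-- ext lemma
lemma Overpartition.ext' {n : ℕ} {π σ : Overpartition n}
    (h1 : π.count = σ.count) (h2 : π.overlined = σ.overlined) : π = σ := by
  cases π; cases σ; simp_all

-- the finsupp adding one copy of each odd part below 2j
noncomputable def addF (j : ℕ) : ℕ →₀ ℕ :=
  Finsupp.onFinset (Finset.range (2*j)) (fun m => if m % 2 = 1 ∧ m < 2*j then 1 else 0)
    (by intro m hm; simp only [ne_eq, ite_eq_right_iff, not_forall] at hm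
        simp only [Finset.mem_range]; tauto)

lemma addF_apply (j m : ℕ) : addF j m = if m % 2 = 1 ∧ m < 2*j then 1 else 0 := rfl

lemma sum_odd_range (j : ℕ) : ∑ m ∈ Finset.range (2*j), (if m % 2 = 1 then m else 0) = j^2 := by
  induction j with
  | zero => simp
  | succ j ih =>
    have : 2 * (j+1) = (2*j) + 1 + 1 := by ring
    rw [this, Finset.sum_range_succ, Finset.sum_range_succ, ih]
    have h1 : (2*j) % 2 = 0 := by omega
    have h2 : (2*j+1) % 2 = 1 := by omega
    simp [h1, h2]
    ring

lemma addF_sum (j : ℕ) : ((addF j).sum fun k m => k * m) = j^2 := by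
  rw [addF, Finsupp.onFinset_sum _ (fun a => by simp)]
  rw [← sum_odd_range j]
  apply Finset.sum_congr rfl
  intro m hm
  simp only [Finset.mem_range] at hm
  by_cases h : m % 2 = 1 <;> simp [h, hm]

lemma sum_add_addF (c : ℕ →₀ ℕ) (j : ℕ) :
    ((c + addF j).sum fun k m => k * m) = (c.sum fun k m => k * m) + j^2 := by
  rw [Finsupp.sum_add_index' (fun a => by simp) (fun a b₁ b₂ => by ring), addF_sum]

lemma sub_add_addF {c : ℕ →₀ ℕ} {j : ℕ} (h : ∀ m, addF j m ≤ c m) :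
    (c - addF j) + addF j = c := by
  ext a
  have := h a
  simp only [Finsupp.add_apply, Finsupp.tsub_apply]
  omega

lemma count_mul_le {n : ℕ} (π : Overpartition n) (k : ℕ) : k * π.count k ≤ n := by
  by_cases h : π.count k = 0
  · simp [h]
  · have hk : k ∈ π.count.support := Finsupp.mem_support_iff.mpr h
    have h1 : k * π.count k ≤ π.count.sum fun k m => k * m := by
      rw [Finsupp.sum]
      exact Finset.single_le_sum (f := fun i => i * π.count i) (fun i _ => Nat.zero_le _) hk
    have := π.weight
    omega

lemma over_le {n : ℕ} (π : Overpartition n) {k : ℕ} (hk : k ∈ π.overlined) : k ≤ n := by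
  have h1 : k ≤ ∑ m ∈ π.overlined, m :=
    Finset.single_le_sum (f := fun m => m) (fun i _ => Nat.zero_le _) hk
  have := π.weight
  omega

lemma count_le {n : ℕ} (π : Overpartition n) (k : ℕ) : π.count k ≤ n := by
  rcases Nat.eq_zero_or_pos k with h | h
  · subst h; simp [π.count_zero]
  · have := count_mul_le π k; nlinarith

lemma count_eq_zero_of_gt {n : ℕ} (π : Overpartition n) {k : ℕ} (hk : n < k) : π.count k = 0 := by
  have := count_mul_le π k
  by_contra h
  have : 1 ≤ π.count k := Nat.one_le_iff_ne_zero.mpr h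
  nlinarith

instance (n : ℕ) : Finite (Overpartition n) := by
  apply Finite.of_injective (f := fun π : Overpartition n =>
    ((fun i : Fin (n+1) => (⟨π.count i.1, Nat.lt_succ_of_le (count_le π i.1)⟩ : Fin (n+1))),
     (fun i : Fin (n+1) => i.1 ∈ π.overlined)))
  intro π σ h
  rw [Prod.mk.injEq] at h
  obtain ⟨h1, h2⟩ := h
  apply Overpartition.ext'
  · ext a
    rcases Nat.lt_or_ge a (n+1) with ha | ha
    · have := congrFun h1 ⟨a, ha⟩
      simpa using congrArg Fin.val this
    · rw [count_eq_zero_of_gt π (by omega), count_eq_zero_of_gt σ (by omega)]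
  · ext a
    rcases Nat.lt_or_ge a (n+1) with ha | ha
    · exact iff_of_eq (congrFun h2 ⟨a, ha⟩)
    · constructor <;> intro hmem
      · exact absurd (over_le π hmem) (by omega)
      · exact absurd (over_le σ hmem) (by omega)

lemma mexSet_mem {n : ℕ} (π : Overpartition n) :
    mex21 π % 2 = 1 ∧ π.count (mex21 π) = 0 := by
  have hne : {m : ℕ | m % 2 = 1 ∧ π.count m = 0}.Nonempty := by
    refine ⟨2 * n + 1, by omega, ?_⟩
    exact count_eq_zero_of_gt π (by omega)
  exact Nat.sInf_mem hne

lemma mex_le {n : ℕ} (π : Overpartition n) {m : ℕ} (h1 : m % 2 = 1) (h2 : π.count m = 0) :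
    mex21 π ≤ m := Nat.sInf_le ⟨h1, h2⟩

-- the predicate "all odd parts below 2j occur non-overlined"
def Pall (j : ℕ) {n : ℕ} (π : Overpartition n) : Prop :=
  ∀ m, m % 2 = 1 → m < 2*j → π.count m ≠ 0

lemma addF_le_count {n : ℕ} {π : Overpartition n} {j : ℕ} (h : Pall j π) :
    ∀ m, addF j m ≤ π.count m := by
  intro m
  rw [addF_apply]
  split
  · next hc => exact Nat.one_le_iff_ne_zero.mpr (h m hc.1 hc.2)
  · exact Nat.zero_le _

lemma weight_lower {n j : ℕ} (π : Overpartition n) (h : Pall j π) : j^2 ≤ n := by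
  have hle := addF_le_count h
  have hc : π.count = (π.count - addF j) + addF j := (sub_add_addF hle).symm
  have hw := π.weight
  rw [hc, sum_add_addF] at hw
  omega

noncomputable def opEquiv (n j : ℕ) (h : j^2 ≤ n) :
    Overpartition (n - j^2) ≃ {π : Overpartition n // Pall j π} where
  toFun σ := ⟨{ count := σ.count + addF j
                overlined := σ.overlined
                count_zero := by
                  simp only [Finsupp.add_apply, σ.count_zero, addF_apply]
                  norm_num
                zero_not_over := σ.zero_not_over
                weight := by
                  rw [sum_add_addF]
                  have := σ.weight
                  omega },
              by
                intro m h1 h2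
                simp only [Finsupp.add_apply, addF_apply, h1, h2, and_self, if_true]
                omega⟩
  invFun π := { count := π.1.count - addF j
                overlined := π.1.overlined
                count_zero := by
                  simp only [Finsupp.tsub_apply, π.1.count_zero]
                  omega
                zero_not_over := π.1.zero_not_over
                weight := by
                  have hle := addF_le_count π.2
                  have hw := π.1.weight
                  have hc : π.1.count = (π.1.count - addF j) + addF j := (sub_add_addF hle).symm
                  rw [hc, sum_add_addF] at hw
                  omega }
  left_inv σ := by
    apply Overpartition.ext'
    · ext a
      simp only [Finsupp.tsub_apply, Finsupp.add_apply]
      omega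
    · rfl
  right_inv π := by
    apply Subtype.ext
    apply Overpartition.ext'
    · exact sub_add_addF (addF_le_count π.2)
    · rfl

lemma Pall_iff {n j : ℕ} (π : Overpartition n) :
    Pall j π ↔
      ((2 * j + 1 ≤ mex21 π ∧ mex21 π % 4 = (2 * j + 1) % 4) ∨
       (2 * (j+1) + 1 ≤ mex21 π ∧ mex21 π % 4 = (2 * (j+1) + 1) % 4)) := by
  obtain ⟨hodd, hzero⟩ := mexSet_mem π
  constructor
  · intro hP
    have hge : 2*j+1 ≤ mex21 π := by
      by_contra hlt
      exact hP _ hodd (by omega) hzero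
    have h4 : mex21 π % 4 = (2*j+1) % 4 ∨ mex21 π % 4 = (2*(j+1)+1) % 4 := by omega
    rcases h4 with h | h
    · exact Or.inl ⟨hge, h⟩
    · exact Or.inr ⟨by omega, h⟩
  · rintro (⟨hge, -⟩ | ⟨hge, -⟩) <;>
      · intro m hm hlt h0
        have := mex_le π hm h0
        omega

lemma Pall_not_both {n j : ℕ} (π : Overpartition n) :
    ¬((2 * j + 1 ≤ mex21 π ∧ mex21 π % 4 = (2 * j + 1) % 4) ∧
      (2 * (j+1) + 1 ≤ mex21 π ∧ mex21 π % 4 = (2 * (j+1) + 1) % 4)) := by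
  rintro ⟨⟨-, h1⟩, ⟨-, h2⟩⟩
  omega

theorem pbar_eq_op21_add_op21 (n j : ℕ) (hn : 1 ≤ n) (hj : 1 ≤ j) :
    pbarZ ((n : ℤ) - (j : ℤ) ^ 2) = op21 n j + op21 n (j + 1) := by
  classical
  set p : Overpartition n → Prop :=
    fun π => 2 * j + 1 ≤ mex21 π ∧ mex21 π % 4 = (2 * j + 1) % 4 with hp
  set q : Overpartition n → Prop :=
    fun π => 2 * (j+1) + 1 ≤ mex21 π ∧ mex21 π % 4 = (2 * (j+1) + 1) % 4 with hq
  have hdisj : Disjoint p q := by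
    rw [Pi.disjoint_iff]
    intro π
    rw [disjoint_iff_inf_le]
    intro h
    exact Pall_not_both π h
  have hsplit : op21 n j + op21 n (j + 1) = Nat.card {π : Overpartition n // Pall j π} := by
    rw [op21, op21]
    rw [← Nat.card_sum, ← Nat.card_congr (subtypeOrEquiv p q hdisj)]
    exact (Nat.card_congr (Equiv.subtypeEquivRight fun π => (Pall_iff π))).symm
  rw [hsplit]
  rcases Nat.lt_or_ge n (j^2) with hlt | hge
  · have hneg : (n : ℤ) - (j : ℤ) ^ 2 < 0 := by
      have : ((j:ℤ))^2 = ((j^2 : ℕ) : ℤ) := by push_cast; ring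
      omega
    rw [pbarZ, if_pos hneg]
    have : IsEmpty {π : Overpartition n // Pall j π} := by
      constructor
      rintro ⟨π, hP⟩
      exact absurd (weight_lower π hP) (by omega)
    simp [Nat.card_of_isEmpty]
  · have hnn : ¬ ((n : ℤ) - (j : ℤ) ^ 2 < 0) := by
      have : ((j:ℤ))^2 = ((j^2 : ℕ) : ℤ) := by push_cast; ring
      omega
    rw [pbarZ, if_neg hnn]
    have htn : ((n : ℤ) - (j : ℤ) ^ 2).toNat = n - j^2 := by
      have : ((j:ℤ))^2 = ((j^2 : ℕ) : ℤ) := by push_cast; ring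
      omega
    rw [htn, pbar]
    exact Nat.card_congr (opEquiv n j hge)
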